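/- arXiv:1208.3889 — 2 statements merged into one kernel-verified Lean document; each statement's English description precedes it below -/
import Mathlib

section
/- (Wigner's Kramers degeneracy) Let 𝓗 be a complex Hilbert space, H a bounded self-adjoint linear operator on 𝓗, and T : 𝓗 → 𝓗 an antiunitary bijection. Assume T² = -I (fermion condition) and T∘H = H∘T (time reversal invariance). If H has at least one eigenvector, then H has two orthogonal nonzero eigenvectors with the same eigenvalue: namely, there exist ψ ≠ 0 and λ ∈ ℝ with Hψ = λψ, H(Tψ) = λ(Tψ), Tψ ≠ 0, and ⟨ψ, Tψ⟩ = 0. -/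
theorem wigner_kramers_degeneracy
    {𝓗 : Type*} [NormedAddCommGroup 𝓗] [InnerProductSpace ℂ 𝓗] [CompleteSpace 𝓗]
    (H : 𝓗 →L[ℂ] 𝓗)
    (hH_sa : ∀ φ ψ : 𝓗, @inner ℂ _ _ (H φ) ψ = @inner ℂ _ _ φ (H ψ))
    (T : 𝓗 → 𝓗)
    (hT_bij : Function.Bijective T)
    (hT_add : ∀ φ ψ : 𝓗, T (φ + ψ) = T φ + T ψ)
    (hT_smul : ∀ (c : ℂ) (ψ : 𝓗), T (c • ψ) = (starRingEnd ℂ c) • T ψ)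
    (hT_inner : ∀ φ ψ : 𝓗, @inner ℂ _ _ (T φ) (T ψ) = @inner ℂ _ _ ψ φ)
    (hT_sq : ∀ ψ : 𝓗, T (T ψ) = -ψ)
    (hTH : ∀ ψ : 𝓗, T (H ψ) = H (T ψ))
    (h_eig : ∃ ψ : 𝓗, ψ ≠ 0 ∧ ∃ μ : ℂ, H ψ = μ • ψ) :
    ∃ (ψ : 𝓗) (lam : ℝ), ψ ≠ 0 ∧ H ψ = (lam : ℂ) • ψ ∧
      H (T ψ) = (lam : ℂ) • T ψ ∧ T ψ ≠ 0 ∧ @inner ℂ _ _ ψ (T ψ) = 0 := by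
  obtain ⟨ψ, hψ, μ, hμ⟩ := h_eig
  -- μ is real
  have hinner : (starRingEnd ℂ μ) * (inner ℂ ψ ψ : ℂ) = μ * (inner ℂ ψ ψ : ℂ) := by
    have := hH_sa ψ ψ
    rw [hμ, inner_smul_left, inner_smul_right] at this
    exact this
  have hψψ : (inner ℂ ψ ψ : ℂ) ≠ 0 := by
    exact (inner_self_ne_zero (𝕜 := ℂ)).mpr hψ
  have hreal : (starRingEnd ℂ μ) = μ := mul_right_cancel₀ hψψ hinner
  have hμre : (μ.re : ℂ) = μ := Complex.conj_eq_iff_re.mp hreal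
  refine ⟨ψ, μ.re, hψ, by rw [hμre]; exact hμ, ?_, ?_, ?_⟩
  · rw [← hTH, hμ, hT_smul, hreal, hμre]
  · have h0 : T 0 = 0 := by simpa using hT_smul 0 0
    intro h
    exact hψ (hT_bij.injective (by rw [h, h0]))
  · have h1 := hT_inner ψ (T ψ)
    rw [hT_sq, inner_neg_right] at h1
    have h2 : (inner ℂ (T ψ) ψ : ℂ) = 0 := by linear_combination (-(1:ℂ)/2) * h1
    rw [← inner_conj_symm, h2, map_zero]
end

section
/- Let A be a bounded self-adjoint operator on a separable complex Hilbert space 𝓗 which has a pure point spectrum, i.e., 𝓗 admits a Hilbert (orthonormal) basis consisting of eigenvectors of A. Then every eigenvalue of A has multiplicity 1 (every eigenspace of A is one-dimensional) if and only if the commutant {A}' equals the double commutant {A}''. -/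
/-- The commutant of a bounded operator: all bounded operators commuting with it. -/
def commutant {𝓗 : Type*} [NormedAddCommGroup 𝓗] [InnerProductSpace ℂ 𝓗]
    (A : 𝓗 →L[ℂ] 𝓗) : Set (𝓗 →L[ℂ] 𝓗) :=
  {B | A ∘L B = B ∘L A}

/-- The double commutant of a bounded operator: all bounded operators commuting with
every element of the commutant. -/
def doubleCommutant {𝓗 : Type*} [NormedAddCommGroup 𝓗] [InnerProductSpace ℂ 𝓗]
    (A : 𝓗 →L[ℂ] 𝓗) : Set (𝓗 →L[ℂ] 𝓗) :=
  {C | ∀ B ∈ commutant A, B ∘L C = C ∘L B}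

theorem nondegenerate_iff_commutant_eq_doubleCommutant
    {𝓗 : Type*} [NormedAddCommGroup 𝓗] [InnerProductSpace ℂ 𝓗] [CompleteSpace 𝓗]
    [TopologicalSpace.SeparableSpace 𝓗]
    (A : 𝓗 →L[ℂ] 𝓗)
    (hA_sa : ∀ φ ψ : 𝓗, @inner ℂ _ _ (A φ) ψ = @inner ℂ _ _ φ (A ψ))
    (h_pp : ∃ (ι : Type) (b : HilbertBasis ι ℂ 𝓗) (μ : ι → ℂ),
      ∀ i, A (b i) = μ i • b i) :
    (∀ lam : ℂ, Module.End.eigenspace (A : 𝓗 →ₗ[ℂ] 𝓗) lam ≠ ⊥ →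
        Module.rank ℂ (Module.End.eigenspace (A : 𝓗 →ₗ[ℂ] 𝓗) lam) = 1) ↔
      commutant A = doubleCommutant A := by
  obtain ⟨ι, b, μ, hb⟩ := h_pp
  have hdense : Dense ((Submodule.span ℂ (Set.range b) : Submodule ℂ 𝓗) : Set 𝓗) := by
    rw [Submodule.dense_iff_topologicalClosure_eq_top]
    exact b.dense_span
  constructor
  · intro hmult
    -- every B in commutant is diagonal in basis b
    have hdiag : ∀ B ∈ commutant A, ∀ i : ι, ∃ c : ℂ, B (b i) = c • b i := by
      intro B hB i
      have hmem : B (b i) ∈ Module.End.eigenspace (A : 𝓗 →ₗ[ℂ] 𝓗) (μ i) := by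
        rw [Module.End.mem_eigenspace_iff]
        have h3 : A (B (b i)) = B (A (b i)) := by
          have := congrArg (fun T => T (b i)) hB
          simpa using this
        show A (B (b i)) = μ i • B (b i)
        rw [h3, hb i, map_smul]
      have hbi : (b i) ∈ Module.End.eigenspace (A : 𝓗 →ₗ[ℂ] 𝓗) (μ i) := by
        rw [Module.End.mem_eigenspace_iff]; exact hb i
      have hne : b i ≠ 0 := b.orthonormal.ne_zero i
      have hbot : Module.End.eigenspace (A : 𝓗 →ₗ[ℂ] 𝓗) (μ i) ≠ ⊥ := by
        intro h
        rw [h, Submodule.mem_bot] at hbi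
        exact hne hbi
      have hrank := hmult (μ i) hbot
      obtain ⟨v₀, hv₀⟩ := rank_le_one_iff.mp hrank.le
      obtain ⟨r, hr⟩ := hv₀ ⟨b i, hbi⟩
      obtain ⟨s, hs⟩ := hv₀ ⟨B (b i), hmem⟩
      have hr0 : r ≠ 0 := by
        rintro rfl
        rw [zero_smul] at hr
        exact hne (by simpa using congrArg Subtype.val hr.symm)
      refine ⟨s * r⁻¹, ?_⟩
      have h1 : (b i) = r • (v₀ : 𝓗) := by
        simpa using congrArg Subtype.val hr.symm
      have h2 : B (b i) = s • (v₀ : 𝓗) := by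
        simpa using congrArg Subtype.val hs.symm
      rw [h2, h1, smul_smul, mul_assoc, inv_mul_cancel₀ hr0, mul_one]
    apply Set.eq_of_subset_of_subset
    · intro B hB B' hB'
      obtain ⟨β, hβ⟩ := Classical.axiom_of_choice (hdiag B hB)
      obtain ⟨γ, hγ⟩ := Classical.axiom_of_choice (hdiag B' hB')
      refine ContinuousLinearMap.ext_on hdense ?_
      rintro x ⟨i, rfl⟩
      simp only [ContinuousLinearMap.comp_apply, hβ i, hγ i, map_smul, smul_smul, mul_comm]
    · intro C hC
      exact hC A rfl
  · intro heq lam hne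
    by_contra hrank
    -- eigenspace is nontrivial
    obtain ⟨e, he, he0⟩ := Submodule.exists_mem_ne_zero_of_ne_bot hne
    have hnt : Nontrivial (Module.End.eigenspace (A : 𝓗 →ₗ[ℂ] 𝓗) lam) :=
      ⟨⟨⟨e, he⟩, 0, by simp [he0]⟩⟩
    have hpos : 0 < Module.rank ℂ (Module.End.eigenspace (A : 𝓗 →ₗ[ℂ] 𝓗) lam) :=
      rank_pos
    have hgt : ¬ (Module.rank ℂ (Module.End.eigenspace (A : 𝓗 →ₗ[ℂ] 𝓗) lam) ≤ 1) := by
      intro h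
      rcases lt_or_eq_of_le h with h' | h'
      · rw [Cardinal.lt_one_iff_zero] at h'
        exact absurd h' hpos.ne'
      · exact hrank h'
    rw [rank_le_one_iff] at hgt
    push_neg at hgt
    obtain ⟨f', hf'⟩ := hgt ⟨e, he⟩
    set f : 𝓗 := (f' : 𝓗) with hfdef
    have hf : f ∈ Module.End.eigenspace (A : 𝓗 →ₗ[ℂ] 𝓗) lam := f'.2
    have hfe : ∀ r : ℂ, r • e ≠ f := by
      intro r hr
      exact hf' r (Subtype.ext hr)
    have hf0 : f ≠ 0 := by
      intro h
      exact hfe 0 (by simp [h])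
    -- lam is real
    have hAe : A e = lam • e := Module.End.mem_eigenspace_iff.mp he
    have hAf : A f = lam • f := Module.End.mem_eigenspace_iff.mp hf
    have hlam : (starRingEnd ℂ) lam = lam := by
      have h1 : @inner ℂ _ _ (A e) e = @inner ℂ _ _ e (A e) := hA_sa e e
      rw [hAe, inner_smul_left, inner_smul_right] at h1
      have hee : @inner ℂ _ _ e e ≠ 0 := by
        exact (inner_self_ne_zero (𝕜 := ℂ)).mpr he0
      exact mul_right_cancel₀ hee h1
    -- rank one operators
    set B : 𝓗 →L[ℂ] 𝓗 := (innerSL ℂ f).smulRight e with hBdef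
    set C : 𝓗 →L[ℂ] 𝓗 := (innerSL ℂ e).smulRight f with hCdef
    have hBcomm : B ∈ commutant A := by
      refine ContinuousLinearMap.ext fun x => ?_
      simp only [ContinuousLinearMap.comp_apply, hBdef, ContinuousLinearMap.smulRight_apply,
        innerSL_apply_apply, map_smul, hAe]
      have : (@inner ℂ _ _ f (A x)) = lam * @inner ℂ _ _ f x := by
        rw [← hA_sa f x, hAf, inner_smul_left, hlam]
      rw [this, smul_smul, mul_comm]
    have hCcomm : C ∈ commutant A := by
      refine ContinuousLinearMap.ext fun x => ?_
      simp only [ContinuousLinearMap.comp_apply, hCdef, ContinuousLinearMap.smulRight_apply,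
        innerSL_apply_apply, map_smul, hAf]
      have : (@inner ℂ _ _ e (A x)) = lam * @inner ℂ _ _ e x := by
        rw [← hA_sa e x, hAe, inner_smul_left, hlam]
      rw [this, smul_smul, mul_comm]
    have hBdc : B ∈ doubleCommutant A := heq ▸ hBcomm
    have hcomm := hBdc C hCcomm
    have := congrArg (fun T => T e) hcomm
    simp only [ContinuousLinearMap.comp_apply, hBdef, hCdef,
      ContinuousLinearMap.smulRight_apply, innerSL_apply_apply, map_smul] at this
    have hee : (@inner ℂ _ _ e e) ≠ 0 := (inner_self_ne_zero (𝕜 := ℂ)).mpr he0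
    have hff : (@inner ℂ _ _ f f) ≠ 0 := (inner_self_ne_zero (𝕜 := ℂ)).mpr hf0
    rw [smul_comm] at this
    have h4 : (@inner ℂ _ _ f e) • f = (@inner ℂ _ _ f f) • e :=
      smul_right_injective 𝓗 hee this
    by_cases hfe0 : (@inner ℂ _ _ f e) = 0
    · rw [hfe0, zero_smul] at h4
      rcases smul_eq_zero.mp h4.symm with h | h
      · exact hff h
      · exact he0 h
    · refine hfe ((@inner ℂ _ _ f e)⁻¹ * (@inner ℂ _ _ f f)) ?_
      rw [mul_smul, ← h4, smul_smul, inv_mul_cancel₀ hfe0, one_smul]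
end
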